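/- arXiv:2108.13578 — 5 statements merged into one kernel-verified Lean document; each statement's English description precedes it below -/
import Mathlib

section
/- Let A ∈ {0,1,−1}^{m×n} be such that the bipartite graph G_A is t-left-regular and a (γ,μ)-unique expander, and let s_max be the maximum degree of a right vertex of G_A. Then for any p ≥ 1, any δ₂ ∈ (0,1), and any γn-sparse x ∈ ℝ^n, ‖Ax‖_p^p ≤ ( t/(1−δ₂)^{p−1} + (μ t / δ₂^{p−1})·(s_max − 1)^{p−1} ) · ‖x‖_p^p. -/
open Finset

noncomputable def lpNorm {ι : Type*} [Fintype ι] (p : ℝ) (x : ι → ℝ) : ℝ :=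
  (∑ i, |x i| ^ p) ^ (1 / p)

/-- `x` has at most `k` nonzero coordinates. -/
def Sparse {ι : Type*} (k : ℝ) (x : ι → ℝ) : Prop :=
  ((Function.support x).ncard : ℝ) ≤ k

/-- `x` is `(k, ε)`-`ℓ_p`-compressible. -/
def Compressible {ι : Type*} [Fintype ι] (p k ε : ℝ) (x : ι → ℝ) : Prop :=
  ∃ y : ι → ℝ, Sparse k y ∧ lpNorm p (x - y) ≤ ε * lpNorm p x

/-- A subspace is `(k, ε)`-`ℓ_p`-spread if every nonzero vector in it is not
`(k, ε)`-`ℓ_p`-compressible. -/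
def SpreadSubspace {ι : Type*} [Fintype ι] (p k ε : ℝ) (X : Submodule ℝ (ι → ℝ)) : Prop :=
  ∀ x ∈ X, x ≠ 0 → ¬ Compressible p k ε x

/-- The `(ℓ_q, ℓ_p)`-distortion of a vector. -/
noncomputable def distortion {ι : Type*} [Fintype ι] (q p : ℝ) (x : ι → ℝ) : ℝ :=
  (Fintype.card ι : ℝ) ^ (1 / q - 1 / p) * lpNorm p x / lpNorm q x

/-- The `(ℓ_q, ℓ_p)`-distortion of a subspace. -/
noncomputable def distortionSub {ι : Type*} [Fintype ι] (q p : ℝ)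
    (X : Submodule ℝ (ι → ℝ)) : ℝ :=
  sSup {d | ∃ x ∈ X, x ≠ 0 ∧ d = distortion q p x}

/-- A bipartite graph, presented as the neighbor sets of the left vertices,
is `t`-left-regular. -/
def LeftRegular {n m : ℕ} (N : Fin n → Finset (Fin m)) (t : ℕ) : Prop :=
  ∀ u, (N u).card = t

/-- The neighborhood `N(S)` of a set `S` of left vertices. -/
def nbrs {n m : ℕ} (N : Fin n → Finset (Fin m)) (S : Finset (Fin n)) : Finset (Fin m) :=
  S.biUnion N

/-- The set `U(S)` of unique neighbors of a set `S` of left vertices. -/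
def uniqueNbrs {n m : ℕ} (N : Fin n → Finset (Fin m)) (S : Finset (Fin n)) : Finset (Fin m) :=
  (nbrs N S).filter (fun r => (S.filter (fun v => r ∈ N v)).card = 1)

/-- The degree of a right vertex. -/
def rightDeg {n m : ℕ} (N : Fin n → Finset (Fin m)) (r : Fin m) : ℕ :=
  (Finset.univ.filter (fun u => r ∈ N u)).card

/-- `(γ, μ)`-vertex expansion. -/
def VertexExpander {n m : ℕ} (N : Fin n → Finset (Fin m)) (t : ℕ) (γ μ : ℝ) : Prop :=
  ∀ S : Finset (Fin n), (S.card : ℝ) ≤ γ * n →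
    (t : ℝ) * (1 - μ) * S.card ≤ ((nbrs N S).card : ℝ)

/-- `(γ, μ)`-unique expansion. -/
def UniqueExpander {n m : ℕ} (N : Fin n → Finset (Fin m)) (t : ℕ) (γ μ : ℝ) : Prop :=
  ∀ S : Finset (Fin n), (S.card : ℝ) ≤ γ * n →
    (t : ℝ) * (1 - μ) * S.card ≤ ((uniqueNbrs N S).card : ℝ)

/-- The bipartite graph `G_A` of a matrix, presented by neighbor sets of left vertices
(columns): the neighbors of `u ∈ V_L` are the rows `r` with `A r u ≠ 0`. -/
noncomputable def matNbrs {m n : ℕ} (A : Matrix (Fin m) (Fin n) ℝ) : Fin n → Finset (Fin m) :=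
  fun u => Finset.univ.filter (fun r => A r u ≠ 0)

/-- `A ∈ M_{m,n,s,t}`: entries in `{0, 1, -1}`, every row has exactly `s` nonzero entries,
and every column has exactly `t` nonzero entries. -/
def Biregular {m n : ℕ} (s t : ℕ) (A : Matrix (Fin m) (Fin n) ℝ) : Prop :=
  (∀ r u, A r u = 0 ∨ A r u = 1 ∨ A r u = -1) ∧
  (∀ r : Fin m, (Finset.univ.filter (fun u => A r u ≠ 0)).card = s) ∧
  (∀ u : Fin n, (Finset.univ.filter (fun r => A r u ≠ 0)).card = t)

/-- The bipartite graph on `V_L ⊕ V_R` associated with left-neighbor data `N`. -/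
def bipGraph {n m : ℕ} (N : Fin n → Finset (Fin m)) : SimpleGraph (Fin n ⊕ Fin m) where
  Adj x y :=
    match x, y with
    | Sum.inl u, Sum.inr r => r ∈ N u
    | Sum.inr r, Sum.inl u => r ∈ N u
    | _, _ => False
  symm := ⟨by rintro (u | r) (u' | r') h <;> first | exact h.elim | exact h⟩
  loopless := ⟨by rintro (u | r) h <;> exact h.elim⟩

/-- The ball of radius `ℓ` about `v` in a graph. -/
def graphBall {V : Type*} (G : SimpleGraph V) (v : V) (ℓ : ℕ) : Set V :=
  {w | G.Reachable v w ∧ G.dist v w ≤ ℓ}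

/-- The ball of radius `ℓ` about `v` contains no cycle. -/
def BallAcyclic {V : Type*} (G : SimpleGraph V) (v : V) (ℓ : ℕ) : Prop :=
  (SimpleGraph.induce (graphBall G v ℓ) G).IsAcyclic

/-- `𝒢_{m,n,s,t}`: the set of bipartite graphs on `V_L = Fin n`, `V_R = Fin m`
(presented by neighbor sets of left vertices) in which every left vertex has degree
exactly `t` and every right vertex has degree exactly `s`. -/
def GSet (m n s t : ℕ) : Finset (Fin n → Finset (Fin m)) :=
  Finset.univ.filter (fun N => (∀ u, (N u).card = t) ∧ (∀ r, rightDeg N r = s))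

/-- The edge set `F` is contained in the edge set of the graph given by `N`. -/
def edgesSubset {n m : ℕ} (F : Finset (Fin n × Fin m)) (N : Fin n → Finset (Fin m)) : Prop :=
  ∀ e ∈ F, e.2 ∈ N e.1

/-- The `ℓ₂ → ℓ₂` operator norm of a matrix. -/
noncomputable def l2OpNorm {m n : ℕ} (A : Matrix (Fin m) (Fin n) ℝ) : ℝ :=
  sSup {c | ∃ x : Fin n → ℝ, x ≠ 0 ∧ c = lpNorm 2 (A.mulVec x) / lpNorm 2 x}

/-!
For each row `r` choose a head `h r`: a neighbour of `r` of largest `|x u|`. Then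
`|(Ax)_r| ≤ |x_{h r}| + ∑_{u ∈ N(r), u ≠ h r} |x u|`, and convexity of `y ↦ y ^ p` with weights
`1 - δ₂, δ₂` splits the `p`-th power of this sum. The heads contribute at most `t ‖x‖_p^p`, as
every left vertex has only `t` neighbours, and by the power-mean inequality the second part of a row costs at most `(s_max - 1)^(p-1)` times
the sum of the `|x u|^p` over its non-head neighbours. It remains to show that the total weight of
non-head incidences is at most `μ t ‖x‖_p^p`. Every superlevel set `P` of `|x|` is closed under
taking heads, so the non-head incidences inside `P` number `t|P| - |N(P)| ≤ μ t |P|` by unique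
expansion, and a layer-cake argument turns these counts into the weighted bound.
-/

namespace Real

theorem mul_div_rpow_eq_rpow_div_rpow_sub_one {a c p : ℝ} (ha : 0 ≤ a) (hc : 0 < c) :
    c * (a / c) ^ p = a ^ p / c ^ (p - 1) := by
  have : c ^ p ≠ 0 := by positivity
  rw [div_rpow ha hc.le, rpow_sub_one hc.ne']
  field_simp

theorem add_rpow_le_rpow_div_add_rpow_div {a b δ p : ℝ} (ha : 0 ≤ a) (hb : 0 ≤ b)
    (hδ0 : 0 < δ) (hδ1 : δ < 1) (hp : 1 ≤ p) :
    (a + b) ^ p ≤ a ^ p / (1 - δ) ^ (p - 1) + b ^ p / δ ^ (p - 1) := by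
  have hδ' : 0 < 1 - δ := by linarith
  have h := (convexOn_rpow hp).2 (x := a / (1 - δ)) (y := b / δ)
    (Set.mem_Ici.2 (by positivity)) (Set.mem_Ici.2 (by positivity)) hδ'.le hδ0.le (by ring)
  simp only [smul_eq_mul, mul_div_cancel₀ _ hδ'.ne', mul_div_cancel₀ _ hδ0.ne'] at h
  rwa [mul_div_rpow_eq_rpow_div_rpow_sub_one ha hδ',
    mul_div_rpow_eq_rpow_div_rpow_sub_one hb hδ0] at h

end Real

namespace Finset

theorem sum_mul_le_of_sum_superlevel_le {ι : Type*} (s : Finset ι) {c w : ι → ℝ} {K : ℝ}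
    (hw : ∀ i ∈ s, 0 ≤ w i) (hc : ∀ θ, ∑ i ∈ s with θ < w i, c i ≤ K * #{i ∈ s | θ < w i}) :
    ∑ i ∈ s, c i * w i ≤ K * ∑ i ∈ s, w i := by
  induction s using Finset.strongInduction generalizing w with
  | H s ih =>
  rcases s.eq_empty_or_nonempty with rfl | hs
  · simp
  obtain ⟨a, ha, hmin⟩ := s.exists_min_image w hs
  set s' := {i ∈ s | w a < w i}
  -- Peel off the bottom layer `w a • c` (bounded by `hc` below all weights); the rest is the
  -- same problem for `w - w a` on the strictly smaller set `s'`.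
  have hshift : ∀ f : ι → ℝ, ∑ i ∈ s', f i * (w i - w a) = ∑ i ∈ s, f i * (w i - w a) :=
    fun f => sum_filter_of_ne fun i hi hne =>
      lt_of_le_of_ne (hmin i hi) fun h => hne (by rw [h, sub_self, mul_zero])
  have hlevel : ∀ θ, {i ∈ s' | θ < w i - w a} = {i ∈ s | max θ 0 + w a < w i} := fun θ => by
    ext i
    simp only [s', mem_filter, ← max_add_add_right, max_lt_iff, zero_add, lt_sub_iff_add_lt]
    tauto
  have htail := ih s' (filter_ssubset.2 ⟨a, ha, lt_irrefl _⟩) (w := fun i => w i - w a)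
    (fun i hi => sub_nonneg.2 (mem_filter.1 hi).2.le) fun θ => by
      simpa only [hlevel] using hc (max θ 0 + w a)
  have hbottom := hc (w a - 1)
  rw [filter_true_of_mem fun i hi => by linarith [hmin i hi]] at hbottom
  calc ∑ i ∈ s, c i * w i = ∑ i ∈ s', c i * (w i - w a) + w a * ∑ i ∈ s, c i := by
        rw [hshift, mul_sum, ← sum_add_distrib]; exact sum_congr rfl fun i _ => by ring
    _ ≤ K * ∑ i ∈ s', 1 * (w i - w a) + w a * (K * #s) := by
        simp only [one_mul]; gcongr; exact hw a ha
    _ = K * ∑ i ∈ s, w i := by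
        rw [hshift]; simp only [one_mul, sum_sub_distrib, sum_const, nsmul_eq_mul]; ring


theorem sum_sum_filter_eq_sum_card_filter_mul {α β : Type*} [Fintype α] [Fintype β]
    (R : α → β → Prop) [DecidableRel R] (f : β → ℝ) :
    ∑ a, ∑ b with R a b, f b = ∑ b, (#{a | R a b} : ℝ) * f b := by
  simp only [sum_filter]
  rw [sum_comm]
  simp [← sum_filter, sum_const]

end Finset

theorem Matrix.abs_mulVec_le_sum_abs {ι κ : Type*} [Fintype κ] {A : Matrix ι κ ℝ}
    (hA : ∀ r u, |A r u| ≤ 1) (x : κ → ℝ) (r : ι) :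
    |A.mulVec x r| ≤ ∑ u with A r u ≠ 0, |x u| := by
  classical
  calc |A.mulVec x r| ≤ ∑ u, |A r u * x u| := abs_sum_le_sum_abs _ _
    _ = ∑ u with A r u ≠ 0, |A r u * x u| := by
        rw [sum_filter_of_ne]; intro u _ h hA0; simp [hA0] at h
    _ ≤ ∑ u with A r u ≠ 0, |x u| := sum_le_sum fun u _ => by
        rw [abs_mul]; exact mul_le_of_le_one_left (abs_nonneg _) (hA r u)

theorem lpNorm_rpow_eq_sum {ι : Type*} [Fintype ι] {p : ℝ} (hp : p ≠ 0) (y : ι → ℝ) :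
    lpNorm p y ^ p = ∑ i, |y i| ^ p := by
  rw [lpNorm, ← Real.rpow_mul (sum_nonneg fun i _ => by positivity), one_div_mul_cancel hp,
    Real.rpow_one]

section HeadMap

variable {m n : ℕ}

def IsHeadMap (N : Fin n → Finset (Fin m)) (f : Fin n → ℝ) (h : Fin m → Fin n) : Prop :=
  ∀ r u, r ∈ N u → r ∈ N (h r) ∧ f u ≤ f (h r)

theorem exists_isHeadMap [Nonempty (Fin n)] (N : Fin n → Finset (Fin m)) (f : Fin n → ℝ) :
    ∃ h, IsHeadMap N f h := by
  classical
  have hmax : ∀ r, ∃ v, ∀ u, r ∈ N u → r ∈ N v ∧ f u ≤ f v := fun r => by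
    by_cases hr : ∃ u, r ∈ N u
    · obtain ⟨v, hv, hmax⟩ := exists_max_image {u | r ∈ N u} f
        (hr.imp fun u hu => mem_filter.2 ⟨mem_univ u, hu⟩)
      exact ⟨v, fun u hu => ⟨(mem_filter.1 hv).2, hmax u (mem_filter.2 ⟨mem_univ u, hu⟩)⟩⟩
    · exact ⟨Classical.arbitrary _, fun u hu => (hr ⟨u, hu⟩).elim⟩
  choose h hh using hmax
  exact ⟨h, hh⟩

theorem card_nonHead_le {N : Fin n → Finset (Fin m)} {f : Fin n → ℝ} {h : Fin m → Fin n}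
    (hh : IsHeadMap N f h) (r : Fin m) :
    #{u | r ∈ N u ∧ h r ≠ u} ≤ rightDeg N r - 1 := by
  rcases eq_empty_or_nonempty {u | r ∈ N u ∧ h r ≠ u} with he | ⟨u, hu⟩
  · simp [he]
  have hmem : h r ∈ ({u | r ∈ N u} : Finset (Fin n)) :=
    mem_filter.2 ⟨mem_univ _, (hh r u (mem_filter.1 hu).2.1).1⟩
  calc #{u | r ∈ N u ∧ h r ≠ u} ≤ #(({u | r ∈ N u} : Finset (Fin n)).erase (h r)) :=
        card_le_card fun v hv => by
          simp only [mem_filter, mem_univ, true_and, mem_erase] at hv ⊢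
          exact ⟨Ne.symm hv.2, hv.1⟩
    _ = rightDeg N r - 1 := card_erase_of_mem hmem

theorem sum_card_nonHead_add_card_nbrs_le (N : Fin n → Finset (Fin m)) (h : Fin m → Fin n)
    (P : Finset (Fin n)) (hP : ∀ u ∈ P, ∀ r ∈ N u, h r ∈ P ∧ r ∈ N (h r)) :
    ∑ u ∈ P, #{r | r ∈ N u ∧ h r ≠ u} + #(nbrs N P) ≤ ∑ u ∈ P, #(N u) := by
  have hnbrs : nbrs N P ⊆ P.biUnion fun u => {r | r ∈ N u ∧ h r = u} := fun r hr => by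
    obtain ⟨u, hu, hru⟩ := mem_biUnion.1 hr
    obtain ⟨hhP, hhN⟩ := hP u hu r hru
    exact mem_biUnion.2 ⟨h r, hhP, mem_filter.2 ⟨mem_univ r, hhN, rfl⟩⟩
  calc ∑ u ∈ P, #{r | r ∈ N u ∧ h r ≠ u} + #(nbrs N P)
      ≤ ∑ u ∈ P, #{r | r ∈ N u ∧ h r ≠ u} + ∑ u ∈ P, #{r | r ∈ N u ∧ h r = u} := by
        gcongr; exact (card_le_card hnbrs).trans card_biUnion_le
    _ = ∑ u ∈ P, #(N u) := by
        rw [← sum_add_distrib]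
        refine sum_congr rfl fun u _ => ?_
        rw [← filter_filter, ← filter_filter, filter_univ_mem]
        exact (add_comm _ _).trans (card_filter_add_card_filter_not (fun r => h r = u))

end HeadMap

section Expander

variable {m n t : ℕ} {γ μ : ℝ} {N : Fin n → Finset (Fin m)}

theorem sum_card_nonHead_le (hreg : LeftRegular N t) (hexp : UniqueExpander N t γ μ)
    (h : Fin m → Fin n) {P : Finset (Fin n)} (hPγ : (#P : ℝ) ≤ γ * n)
    (hP : ∀ u ∈ P, ∀ r ∈ N u, h r ∈ P ∧ r ∈ N (h r)) :
    ∑ u ∈ P, (#{r | r ∈ N u ∧ h r ≠ u} : ℝ) ≤ μ * t * #P := by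
  have hcount : ∑ u ∈ P, (#{r | r ∈ N u ∧ h r ≠ u} : ℝ) + #(nbrs N P) ≤ #P * t := by
    have := sum_card_nonHead_add_card_nbrs_le N h P hP
    simp only [hreg _, sum_const, smul_eq_mul] at this
    exact_mod_cast this
  have hunique : (#(uniqueNbrs N P) : ℝ) ≤ #(nbrs N P) := by
    exact_mod_cast card_le_card (filter_subset _ _)
  linarith [hexp P hPγ]

theorem sum_card_nonHead_mul_rpow_le (hreg : LeftRegular N t) (hexp : UniqueExpander N t γ μ)
    {x : Fin n → ℝ} (hx : Sparse (γ * n) x) {h : Fin m → Fin n}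
    (hh : IsHeadMap N (fun u => |x u|) h) {p : ℝ} (hp : 0 < p) :
    ∑ u, (#{r | r ∈ N u ∧ h r ≠ u} : ℝ) * |x u| ^ p ≤ μ * t * ∑ u, |x u| ^ p := by
  classical
  set S := (Function.support x).toFinset
  have hSγ : (#S : ℝ) ≤ γ * n := by rwa [Sparse, Set.ncard_eq_toFinset_card'] at hx
  have hsupp : ∀ f : Fin n → ℝ, ∑ u ∈ S, f u * |x u| ^ p = ∑ u, f u * |x u| ^ p :=
    fun f => sum_subset (subset_univ _) fun u _ hu => by
      simp only [S, Set.mem_toFinset, Function.mem_support, not_not] at hu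
      simp [hu, Real.zero_rpow hp.ne']
  have hsupp' : ∑ u ∈ S, |x u| ^ p = ∑ u, |x u| ^ p := by simpa using hsupp 1
  rw [← hsupp, ← hsupp']
  refine sum_mul_le_of_sum_superlevel_le S (fun u _ => by positivity) fun θ => ?_
  refine sum_card_nonHead_le hreg hexp h (le_trans (by exact_mod_cast card_filter_le _ _) hSγ)
    fun u hu r hr => ?_
  obtain ⟨huS, hθ⟩ := mem_filter.1 hu
  obtain ⟨hhN, hle⟩ := hh r u hr
  have hxu : 0 < |x u| := abs_pos.2 (by simpa [S] using huS)
  refine ⟨mem_filter.2 ⟨?_, hθ.trans_le (Real.rpow_le_rpow hxu.le hle hp.le)⟩, hhN⟩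
  simpa [S] using (hxu.trans_le hle).ne'

theorem sum_rpow_sum_head_le (hreg : LeftRegular N t) (h : Fin m → Fin n) (x : Fin n → ℝ)
    {p : ℝ} (hp : 1 ≤ p) :
    ∑ r, (∑ u with r ∈ N u ∧ h r = u, |x u|) ^ p ≤ t * ∑ u, |x u| ^ p := by
  calc ∑ r, (∑ u with r ∈ N u ∧ h r = u, |x u|) ^ p
      ≤ ∑ r, ∑ u with r ∈ N u, |x u| ^ p := sum_le_sum fun r _ => by
        have hcard : #{u | r ∈ N u ∧ h r = u} ≤ 1 := card_le_one.2 fun a ha b hb =>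
          (mem_filter.1 ha).2.2.symm.trans (mem_filter.1 hb).2.2
        calc (∑ u with r ∈ N u ∧ h r = u, |x u|) ^ p
            ≤ #{u | r ∈ N u ∧ h r = u} ^ (p - 1) * ∑ u with r ∈ N u ∧ h r = u, |x u| ^ p :=
              Real.rpow_sum_le_const_mul_sum_rpow _ _ hp
          _ ≤ 1 * ∑ u with r ∈ N u, |x u| ^ p := by
              gcongr
              · exact Real.rpow_le_one (by positivity) (by exact_mod_cast hcard) (by linarith)
              · exact And.left
          _ = ∑ u with r ∈ N u, |x u| ^ p := one_mul _
    _ = t * ∑ u, |x u| ^ p := by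
        rw [sum_sum_filter_eq_sum_card_filter_mul, mul_sum]
        simp [hreg _]

theorem sum_rpow_sum_nonHead_le {smax : ℕ} (hreg : LeftRegular N t)
    (hexp : UniqueExpander N t γ μ) (hdeg : ∀ r, rightDeg N r ≤ smax) (hsmax : 1 ≤ smax)
    {x : Fin n → ℝ} (hx : Sparse (γ * n) x) {h : Fin m → Fin n}
    (hh : IsHeadMap N (fun u => |x u|) h) {p : ℝ} (hp : 1 ≤ p) :
    ∑ r, (∑ u with r ∈ N u ∧ h r ≠ u, |x u|) ^ p ≤
      ((smax : ℝ) - 1) ^ (p - 1) * (μ * t * ∑ u, |x u| ^ p) := by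
  calc ∑ r, (∑ u with r ∈ N u ∧ h r ≠ u, |x u|) ^ p
      ≤ ∑ r, ((smax : ℝ) - 1) ^ (p - 1) * ∑ u with r ∈ N u ∧ h r ≠ u, |x u| ^ p :=
        sum_le_sum fun r _ => by
          refine (Real.rpow_sum_le_const_mul_sum_rpow _ _ hp).trans ?_
          gcongr
          rw [← Nat.cast_one, ← Nat.cast_sub hsmax, Nat.cast_le]
          exact (card_nonHead_le hh r).trans (Nat.sub_le_sub_right (hdeg r) 1)
    _ ≤ _ := by
        rw [← mul_sum, sum_sum_filter_eq_sum_card_filter_mul]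
        gcongr
        · exact Real.rpow_nonneg (sub_nonneg.2 (by exact_mod_cast hsmax)) _
        · exact sum_card_nonHead_mul_rpow_le hreg hexp hx hh (by linarith)

end Expander

theorem exists_rightDeg_pos {m n t : ℕ} [Nonempty (Fin n)] {N : Fin n → Finset (Fin m)}
    (hreg : LeftRegular N t) (ht : 0 < t) : ∃ r, 0 < rightDeg N r := by
  obtain ⟨r, hr⟩ := card_pos.1 ((hreg (Classical.arbitrary _)).symm ▸ ht)
  exact ⟨r, card_pos.2 ⟨_, mem_filter.2 ⟨mem_univ _, hr⟩⟩⟩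

theorem sum_abs_mulVec_rpow_le {m n t smax : ℕ} [Nonempty (Fin n)] {γ μ p δ : ℝ}
    {A : Matrix (Fin m) (Fin n) ℝ} (hA : ∀ r u, |A r u| ≤ 1)
    (hreg : LeftRegular (matNbrs A) t) (hexp : UniqueExpander (matNbrs A) t γ μ)
    (hdeg : ∀ r, rightDeg (matNbrs A) r ≤ smax) (hsmax : 1 ≤ smax)
    (hp : 1 ≤ p) (hδ0 : 0 < δ) (hδ1 : δ < 1) {x : Fin n → ℝ} (hx : Sparse (γ * n) x) :
    ∑ r, |A.mulVec x r| ^ p ≤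
      ((t : ℝ) / (1 - δ) ^ (p - 1) + μ * t / δ ^ (p - 1) * ((smax : ℝ) - 1) ^ (p - 1)) *
        ∑ u, |x u| ^ p := by
  classical
  set N := matNbrs A
  obtain ⟨h, hh⟩ := exists_isHeadMap N (fun u => |x u|)
  set head : Fin m → ℝ := fun r => ∑ u with r ∈ N u ∧ h r = u, |x u|
  set tail : Fin m → ℝ := fun r => ∑ u with r ∈ N u ∧ h r ≠ u, |x u|
  have hrow : ∀ r, |A.mulVec x r| ≤ head r + tail r := fun r => by
    have := Matrix.abs_mulVec_le_sum_abs hA x r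
    rw [← sum_filter_add_sum_filter_not _ (fun u => h r = u), filter_filter,
      filter_filter] at this
    simpa [head, tail, N, matNbrs] using this
  calc ∑ r, |A.mulVec x r| ^ p ≤ ∑ r, (head r + tail r) ^ p := by
        gcongr with r; exact hrow r
    _ ≤ ∑ r, (head r ^ p / (1 - δ) ^ (p - 1) + tail r ^ p / δ ^ (p - 1)) := by
        gcongr with r
        exact Real.add_rpow_le_rpow_div_add_rpow_div (by positivity) (by positivity) hδ0 hδ1 hp
    _ = (∑ r, head r ^ p) / (1 - δ) ^ (p - 1) + (∑ r, tail r ^ p) / δ ^ (p - 1) := by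
        rw [sum_add_distrib, sum_div, sum_div]
    _ ≤ (t * ∑ u, |x u| ^ p) / (1 - δ) ^ (p - 1) +
          ((smax : ℝ) - 1) ^ (p - 1) * (μ * t * ∑ u, |x u| ^ p) / δ ^ (p - 1) := by
        gcongr
        · exact sum_rpow_sum_head_le hreg h x hp
        · exact sum_rpow_sum_nonHead_le hreg hexp hdeg hsmax hx hh hp
    _ = _ := by ring

/-- **Upper bound in the ℓ_p-RIP lemma.** If `G_A` is `t`-left-regular and a
`(γ, μ)`-unique expander with maximum right degree `s_max`, then for any `p ≥ 1`,
`δ₂ ∈ (0,1)` and `γn`-sparse `x`,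
`‖Ax‖_p^p ≤ (t/(1-δ₂)^(p-1) + (μt/δ₂^(p-1))(s_max-1)^(p-1)) ‖x‖_p^p`. -/
theorem rip_upper_bound {m n : ℕ} (t smax : ℕ) (γ μ : ℝ)
    (A : Matrix (Fin m) (Fin n) ℝ)
    (hsign : ∀ r u, A r u = 0 ∨ A r u = 1 ∨ A r u = -1)
    (hreg : LeftRegular (matNbrs A) t)
    (hexp : UniqueExpander (matNbrs A) t γ μ)
    (hsmax : smax = Finset.univ.sup (fun r : Fin m => rightDeg (matNbrs A) r))
    (p δ₂ : ℝ) (hp : 1 ≤ p) (hδ0 : 0 < δ₂) (hδ1 : δ₂ < 1) :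
    ∀ x : Fin n → ℝ, Sparse (γ * n) x →
      lpNorm p (A.mulVec x) ^ p ≤
        ((t : ℝ) / (1 - δ₂) ^ (p - 1) +
          μ * t / δ₂ ^ (p - 1) * ((smax : ℝ) - 1) ^ (p - 1)) * lpNorm p x ^ p := by
  intro x hx
  have hp0 : p ≠ 0 := (zero_lt_one.trans_le hp).ne'
  rw [lpNorm_rpow_eq_sum hp0, lpNorm_rpow_eq_sum hp0]
  rcases isEmpty_or_nonempty (Fin n) with hn | hn
  · simp [Matrix.mulVec, dotProduct, Real.zero_rpow hp0]
  rcases Nat.eq_zero_or_pos t with rfl | ht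
  · have hA : A = 0 := by
      ext r u
      simpa [matNbrs] using congrArg (r ∈ ·) (card_eq_zero.1 (hreg u))
    simp [hA, Real.zero_rpow hp0]
  have hdeg : ∀ r, rightDeg (matNbrs A) r ≤ smax := fun r => hsmax ▸ le_sup (mem_univ r)
  obtain ⟨r, hr⟩ := exists_rightDeg_pos hreg ht
  refine sum_abs_mulVec_rpow_le (fun r u => ?_) hreg hexp hdeg (hr.trans_le (hdeg r)) hp hδ0 hδ1 hx
  rcases hsign r u with h | h | h <;> simp [h]
end

section
/- Let G = (V_L, V_R, E) be a bipartite t-left-regular (γ,μ)-unique expander with |V_L| = n. Let k, b be positive integers with kb ≤ γn, and let S₁, …, S_b ⊆ V_L be pairwise disjoint sets, each of size k. Then there exist sets T₁, …, T_b ⊆ V_R, each of size at least (1−μb)tk, such that for each 1 ≤ i ≤ b, every r ∈ T_i has exactly one neighbor in S_i and no neighbors in any S_j with j ≠ i. -/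
open Finset

/-
Let `S = ⋃ Sᵢ`, of size `kb ≤ γn`, so `|U(S)| ≥ (1-μ)tkb`. Take `Tᵢ = U(S) ∩ N(Sᵢ)`: a unique
neighbour of `S` has its one neighbour in exactly one part, so the `Tᵢ` partition `U(S)`, and
`|Tⱼ| ≤ |N(Sⱼ)| ≤ tk`. Hence `|Tᵢ| ≥ |U(S)| - (b-1)tk ≥ (1-μb)tk`.
-/

open Function

section UniqueNeighbors

variable {n m : ℕ} {N : Fin n → Finset (Fin m)} {S S' : Finset (Fin n)} {r : Fin m}

theorem mem_nbrs : r ∈ nbrs N S ↔ ∃ v ∈ S, r ∈ N v :=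
  mem_biUnion

theorem mem_uniqueNbrs : r ∈ uniqueNbrs N S ↔ ∃ v ∈ S, r ∈ N v ∧ ∀ w ∈ S, r ∈ N w → w = v := by
  simp only [uniqueNbrs, mem_filter, mem_nbrs, card_eq_one, eq_singleton_iff_unique_mem]
  constructor
  · rintro ⟨-, v, ⟨hvS, hrv⟩, huniq⟩
    exact ⟨v, hvS, hrv, fun w hwS hrw => huniq w ⟨hwS, hrw⟩⟩
  · rintro ⟨v, hvS, hrv, huniq⟩
    exact ⟨⟨v, hvS, hrv⟩, v, ⟨hvS, hrv⟩, fun w ⟨hwS, hrw⟩ => huniq w hwS hrw⟩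

theorem eq_of_mem_uniqueNbrs (hr : r ∈ uniqueNbrs N S) {v w : Fin n} (hv : v ∈ S) (hw : w ∈ S)
    (hrv : r ∈ N v) (hrw : r ∈ N w) : v = w := by
  obtain ⟨u, -, -, huniq⟩ := mem_uniqueNbrs.mp hr
  rw [huniq v hv hrv, huniq w hw hrw]

theorem mem_uniqueNbrs_of_subset (hS : S' ⊆ S) (hr : r ∈ uniqueNbrs N S)
    (hr' : r ∈ nbrs N S') : r ∈ uniqueNbrs N S' := by
  obtain ⟨v, hvS', hrv⟩ := mem_nbrs.mp hr'
  exact mem_uniqueNbrs.mpr ⟨v, hvS', hrv, fun w hwS' hrw =>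
    eq_of_mem_uniqueNbrs hr (hS hwS') (hS hvS') hrw hrv⟩

theorem card_nbrs_le {t : ℕ} (hreg : LeftRegular N t) (S : Finset (Fin n)) :
    (nbrs N S).card ≤ t * S.card := by
  calc (nbrs N S).card ≤ ∑ v ∈ S, (N v).card := card_biUnion_le
    _ = t * S.card := by rw [sum_congr rfl fun v _ => hreg v, sum_const, smul_eq_mul, mul_comm]

end UniqueNeighbors

section Parts

variable {n m : ℕ} {N : Fin n → Finset (Fin m)} {ι : Type*} [Fintype ι] {S : ι → Finset (Fin n)}

theorem notMem_nbrs_of_mem_uniqueNbrs_biUnion (hdisj : Pairwise (Disjoint on S)) {i j : ι}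
    (hij : i ≠ j) {r : Fin m} (hr : r ∈ uniqueNbrs N (univ.biUnion S) ∩ nbrs N (S i)) :
    r ∉ nbrs N (S j) := by
  intro hrj
  obtain ⟨hrU, hri⟩ := mem_inter.mp hr
  obtain ⟨v, hvi, hrv⟩ := mem_nbrs.mp hri
  obtain ⟨w, hwj, hrw⟩ := mem_nbrs.mp hrj
  have hvw := eq_of_mem_uniqueNbrs hrU (mem_biUnion.mpr ⟨i, mem_univ i, hvi⟩)
    (mem_biUnion.mpr ⟨j, mem_univ j, hwj⟩) hrv hrw
  exact disjoint_left.mp (hdisj hij) hvi (hvw ▸ hwj)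

theorem sum_card_uniqueNbrs_inter_nbrs [DecidableEq ι] (hdisj : Pairwise (Disjoint on S)) :
    ∑ i, (uniqueNbrs N (univ.biUnion S) ∩ nbrs N (S i)).card =
      (uniqueNbrs N (univ.biUnion S)).card := by
  have hcover : univ.biUnion (fun i => uniqueNbrs N (univ.biUnion S) ∩ nbrs N (S i)) =
      uniqueNbrs N (univ.biUnion S) := by
    refine Subset.antisymm (biUnion_subset.mpr fun i _ => inter_subset_left) fun r hr => ?_
    obtain ⟨v, hv, hrv, -⟩ := mem_uniqueNbrs.mp hr
    obtain ⟨i, -, hvi⟩ := mem_biUnion.mp hv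
    exact mem_biUnion.mpr ⟨i, mem_univ i, mem_inter.mpr ⟨hr, mem_nbrs.mpr ⟨v, hvi, hrv⟩⟩⟩
  rw [← card_biUnion, hcover]
  exact fun i _ j _ hij => disjoint_left.mpr fun r hri hrj =>
    notMem_nbrs_of_mem_uniqueNbrs_biUnion hdisj hij hri (mem_inter.mp hrj).2

theorem card_uniqueNbrs_biUnion_le {t k : ℕ} (hreg : LeftRegular N t)
    (hdisj : Pairwise (Disjoint on S)) (hcard : ∀ i, (S i).card ≤ k) (i : ι) :
    (uniqueNbrs N (univ.biUnion S)).card ≤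
      (uniqueNbrs N (univ.biUnion S) ∩ nbrs N (S i)).card + (Fintype.card ι - 1) * (t * k) := by
  classical
  set U := uniqueNbrs N (univ.biUnion S)
  have hpart (j : ι) : (U ∩ nbrs N (S j)).card ≤ t * k :=
    calc (U ∩ nbrs N (S j)).card ≤ (nbrs N (S j)).card := card_le_card inter_subset_right
      _ ≤ t * (S j).card := card_nbrs_le hreg (S j)
      _ ≤ t * k := Nat.mul_le_mul_left t (hcard j)
  calc U.card = (U ∩ nbrs N (S i)).card + ∑ j ∈ univ.erase i, (U ∩ nbrs N (S j)).card := by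
        rw [add_sum_erase _ (fun j => (U ∩ nbrs N (S j)).card) (mem_univ i),
          sum_card_uniqueNbrs_inter_nbrs hdisj]
    _ ≤ (U ∩ nbrs N (S i)).card + (Fintype.card ι - 1) * (t * k) := by
        grw [sum_le_card_nsmul _ _ _ fun j _ => hpart j, card_erase_of_mem (mem_univ i),
          card_univ, smul_eq_mul]

end Parts

theorem disjoint_unique_neighbors_general {n m : ℕ} (t : ℕ) (γ μ : ℝ)
    (N : Fin n → Finset (Fin m))
    (hreg : LeftRegular N t) (hexp : UniqueExpander N t γ μ)
    (k b : ℕ) (hkb : ((k * b : ℕ) : ℝ) ≤ γ * n)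
    (S : Fin b → Finset (Fin n))
    (hdisj : ∀ i j, i ≠ j → Disjoint (S i) (S j))
    (hcard : ∀ i, (S i).card = k) :
    ∃ T : Fin b → Finset (Fin m),
      (∀ i, (1 - μ * b) * ((t : ℝ) * k) ≤ ((T i).card : ℝ)) ∧
      (∀ i, ∀ r ∈ T i,
        ((S i).filter (fun v => r ∈ N v)).card = 1 ∧
        ∀ j, j ≠ i → ∀ v ∈ S j, r ∉ N v) := by
  have hpair : Pairwise (Disjoint on S) := fun i j hij => hdisj i j hij
  have hcardAll : (univ.biUnion S).card = k * b := by
    rw [card_biUnion fun i _ j _ hij => hpair hij]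
    simp [hcard, mul_comm]
  have hU := hexp (univ.biUnion S) (by rwa [hcardAll])
  refine ⟨fun i => uniqueNbrs N (univ.biUnion S) ∩ nbrs N (S i), fun i => ?_, fun i r hr => ?_⟩
  · have hle := card_uniqueNbrs_biUnion_le hreg hpair (fun j => (hcard j).le) i
    rw [Fintype.card_fin] at hle
    have hb : 1 ≤ b := i.pos
    rw [hcardAll] at hU
    have hle' : ((uniqueNbrs N (univ.biUnion S)).card : ℝ) ≤
        ((uniqueNbrs N (univ.biUnion S) ∩ nbrs N (S i)).card : ℝ) + ((b : ℝ) - 1) * (t * k) := by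
      exact_mod_cast hle
    push_cast at hU
    linarith
  · have hrS := mem_uniqueNbrs_of_subset (subset_biUnion_of_mem S (mem_univ i))
      (mem_inter.mp hr).1 (mem_inter.mp hr).2
    refine ⟨(mem_filter.mp hrS).2, fun j hji v hv hrv => ?_⟩
    exact notMem_nbrs_of_mem_uniqueNbrs_biUnion hpair hji.symm hr (mem_nbrs.mpr ⟨v, hv, hrv⟩)

/-- **Disjoint unique-neighbor sets.** If `G` is a `t`-left-regular `(γ, μ)`-unique
expander, `kb ≤ γn`, and `S₁, …, S_b ⊆ V_L` are disjoint sets of size `k` each, then there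
are sets `T₁, …, T_b ⊆ V_R`, each of size at least `(1-μb)tk`, such that every `r ∈ T_i`
has exactly one neighbor in `S_i` and no neighbor in any `S_j`, `j ≠ i`. -/
theorem disjoint_unique_neighbors {n m : ℕ} (t : ℕ) (γ μ : ℝ)
    (N : Fin n → Finset (Fin m))
    (hreg : LeftRegular N t) (hexp : UniqueExpander N t γ μ)
    (k b : ℕ) (hk : 0 < k) (hb : 0 < b) (hkb : ((k * b : ℕ) : ℝ) ≤ γ * n)
    (S : Fin b → Finset (Fin n))
    (hdisj : ∀ i j, i ≠ j → Disjoint (S i) (S j))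
    (hcard : ∀ i, (S i).card = k) :
    ∃ T : Fin b → Finset (Fin m),
      (∀ i, (1 - μ * b) * ((t : ℝ) * k) ≤ ((T i).card : ℝ)) ∧
      (∀ i, ∀ r ∈ T i,
        ((S i).filter (fun v => r ∈ N v)).card = 1 ∧
        ∀ j, j ≠ i → ∀ v ∈ S j, r ∉ N v) :=
  disjoint_unique_neighbors_general t γ μ N hreg hexp k b hkb S hdisj hcard
end

section
/- Let G = (V_L, V_R, E) be a bipartite t-left-regular (γ,μ)-unique expander with n := |V_L| ≥ |V_R|. Then there exists a bipartite t-left-regular (γ,μ)-unique expander G' = (V_L', V_R', E') with V_L' = V_L and |V_R'| ≤ 3|V_R|, such that every vertex of V_R' has degree at most tn/|V_R|. -/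
open Finset

/-! Split every right vertex `r` into `⌊deg r / D⌋ + 1` copies, `D = ⌊t n / m⌋`, distributing the
neighbours of `r` among the copies in blocks of at most `D` consecutive ones. Each left vertex keeps
one edge to a copy of each of its old neighbours, so the new graph projects onto the old one
bijectively on every neighbourhood: left-regularity is preserved, and a unique neighbour of `S` in
the old graph lifts to a unique neighbour of `S` in the new one. Double counting gives at most
`m + t n / D < 3 m` copies. -/

section Lift

variable {n m m' : ℕ}

def IsLift (π : Fin m' → Fin m) (N' : Fin n → Finset (Fin m')) (N : Fin n → Finset (Fin m)) :
    Prop :=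
  ∀ u, Set.BijOn π (N' u) (N u)

variable {π : Fin m' → Fin m} {N' : Fin n → Finset (Fin m')} {N : Fin n → Finset (Fin m)}

theorem IsLift.leftRegular {t : ℕ} (h : IsLift π N' N) (hreg : LeftRegular N t) :
    LeftRegular N' t := fun u => (h u).finsetCard_eq.trans (hreg u)

theorem IsLift.uniqueNbrs_subset_image (h : IsLift π N' N) (S : Finset (Fin n)) :
    uniqueNbrs N S ⊆ (uniqueNbrs N' S).image π := by
  intro r hr
  obtain ⟨-, hcard⟩ := mem_filter.mp hr
  obtain ⟨v, hv⟩ := card_eq_one.mp hcard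
  have hvS : v ∈ S ∧ r ∈ N v := mem_filter.mp (hv ▸ mem_singleton_self v)
  obtain ⟨r', hr'v, rfl⟩ := (h v).surjOn hvS.2
  refine mem_image.mpr ⟨r', mem_filter.mpr ⟨mem_biUnion.mpr ⟨v, hvS.1, hr'v⟩, ?_⟩, rfl⟩
  refine card_eq_one.mpr ⟨v, eq_singleton_iff_unique_mem.mpr ⟨mem_filter.mpr ⟨hvS.1, hr'v⟩, ?_⟩⟩
  intro w hw
  obtain ⟨hwS, hr'w⟩ := mem_filter.mp hw
  exact mem_singleton.mp (hv ▸ mem_filter.mpr ⟨hwS, (h w).mapsTo hr'w⟩)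

theorem IsLift.uniqueExpander {t : ℕ} {γ μ : ℝ} (h : IsLift π N' N)
    (hexp : UniqueExpander N t γ μ) : UniqueExpander N' t γ μ := by
  intro S hS
  refine (hexp S hS).trans (Nat.cast_le.mpr ?_)
  exact (card_le_card (h.uniqueNbrs_subset_image S)).trans card_image_le

end Lift

section Split

variable {n m : ℕ} {p : Fin m → ℕ}

def splitNbrs (N : Fin n → Finset (Fin m)) (piece : ∀ r, Fin n → Fin (p r)) :
    Fin n → Finset (Fin (∑ r, p r)) :=
  fun u => (N u).image fun r => finSigmaFinEquiv ⟨r, piece r u⟩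

variable (N : Fin n → Finset (Fin m)) (piece : ∀ r, Fin n → Fin (p r))

theorem isLift_splitNbrs :
    IsLift (fun x => (finSigmaFinEquiv.symm x).1) (splitNbrs N piece) N := by
  intro u
  refine ⟨fun x hx => ?_, fun x hx y hy hxy => ?_, fun r hr => ?_⟩
  · obtain ⟨r, hr, rfl⟩ := mem_image.mp hx
    simpa using hr
  · obtain ⟨r, -, rfl⟩ := mem_image.mp hx
    obtain ⟨r', -, rfl⟩ := mem_image.mp hy
    obtain rfl : r = r' := by simpa using hxy
    rfl
  · exact ⟨_, mem_image_of_mem _ hr, by simp⟩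

theorem rightDeg_splitNbrs (r : Fin m) (j : Fin (p r)) :
    rightDeg (splitNbrs N piece) (finSigmaFinEquiv ⟨r, j⟩) = #{u | r ∈ N u ∧ piece r u = j} := by
  unfold rightDeg splitNbrs
  congr 1
  ext u
  simp [finSigmaFinEquiv.injective.eq_iff]

end Split

theorem sum_rightDeg {n m t : ℕ} {N : Fin n → Finset (Fin m)} (hreg : LeftRegular N t) :
    ∑ r, rightDeg N r = n * t := by
  calc ∑ r, rightDeg N r = ∑ u, #(univ.bipartiteAbove (fun u r => r ∈ N u) u) :=
        (sum_card_bipartiteAbove_eq_sum_card_bipartiteBelow _).symm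
    _ = n * t := by simp [bipartiteAbove, hreg _]

theorem strictMonoOn_card_filter_lt {α : Type*} [LinearOrder α] (s : Finset α) :
    StrictMonoOn (fun a => #{x ∈ s | x < a}) s := by
  intro a ha b _ hab
  refine card_lt_card ((ssubset_iff_of_subset ?_).mpr ⟨a, ?_, ?_⟩)
  · exact monotone_filter_right _ fun x _ hx => hx.trans hab
  · simp [mem_coe.mp ha, hab]
  · simp

theorem card_filter_div_eq_le {α : Type*} {s : Finset α} {f : α → ℕ} (hf : Set.InjOn f s)
    {D : ℕ} (hD : 0 < D) (j : ℕ) : #{x ∈ s | f x / D = j} ≤ D := by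
  calc #{x ∈ s | f x / D = j} ≤ #(Ico (j * D) (j * D + D)) := by
        refine card_le_card_of_injOn f (fun x hx => ?_) (hf.mono (filter_subset _ _))
        obtain ⟨-, rfl⟩ := mem_filter.mp hx
        simp only [coe_Ico, Set.mem_Ico]
        exact ⟨Nat.div_mul_le_self _ _, Nat.lt_div_mul_add hD⟩
    _ = D := by simp

theorem div_div_lt_two_mul {a m : ℕ} (hm : 0 < m) (hma : m ≤ a) : a / (a / m) < 2 * m := by
  have hq : 0 < a / m := Nat.div_pos hma hm
  rw [Nat.div_lt_iff_lt_mul hq]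
  calc a < m * (a / m + 1) := Nat.lt_mul_div_succ a hm
    _ ≤ m * (2 * (a / m)) := by gcongr; omega
    _ = 2 * m * (a / m) := by ring

theorem exists_isLift_rightDeg_le {n m t D : ℕ} {N : Fin n → Finset (Fin m)}
    (hreg : LeftRegular N t) (hD : 0 < D) :
    ∃ m' ≤ m + n * t / D, ∃ (π : Fin m' → Fin m) (N' : Fin n → Finset (Fin m')),
      IsLift π N' N ∧ ∀ x, rightDeg N' x ≤ D := by
  -- copy `k` of `r` receives the neighbours of `r` whose rank among them lies in `[k D, (k + 1) D)`
  let rank (r : Fin m) (u : Fin n) : ℕ := #{v ∈ ({v | r ∈ N v} : Finset _) | v < u}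
  let piece (r : Fin m) (u : Fin n) : Fin (rightDeg N r / D + 1) :=
    ⟨rank r u / D, Nat.lt_succ_of_le (Nat.div_le_div_right (card_filter_le _ _))⟩
  refine ⟨_, ?_, _, splitNbrs N piece, isLift_splitNbrs N piece, fun x => ?_⟩
  · have hsum : ∑ r, rightDeg N r / D ≤ n * t / D := by
      rw [Nat.le_div_iff_mul_le hD, sum_mul, ← sum_rightDeg hreg]
      exact sum_le_sum fun r _ => Nat.div_mul_le_self _ _
    simpa [sum_add_distrib, add_comm] using hsum
  · obtain ⟨⟨r, j⟩, rfl⟩ := finSigmaFinEquiv.surjective x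
    rw [rightDeg_splitNbrs, ← filter_filter]
    simp only [piece, Fin.ext_iff]
    exact card_filter_div_eq_le (strictMonoOn_card_filter_lt _).injOn hD j

/-- **Bounding right degrees of an expander.** Given a `t`-left-regular `(γ, μ)`-unique
expander `G` with `n = |V_L| ≥ |V_R| = m`, there is a `t`-left-regular `(γ, μ)`-unique
expander `G'` with the same left vertex set, at most `3m` right vertices, and all right
degrees at most `tn/m`. -/
theorem bound_right_degrees {n m : ℕ} (t : ℕ) (γ μ : ℝ) (N : Fin n → Finset (Fin m))
    (hnm : m ≤ n) (hreg : LeftRegular N t) (hexp : UniqueExpander N t γ μ) :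
    ∃ m' : ℕ, m' ≤ 3 * m ∧ ∃ N' : Fin n → Finset (Fin m'),
      LeftRegular N' t ∧ UniqueExpander N' t γ μ ∧
      ∀ r : Fin m', (rightDeg N' r : ℝ) ≤ (t : ℝ) * n / m := by
  rcases Nat.eq_zero_or_pos (n * t / m) with hD | hD
  · refine ⟨m, by omega, N, hreg, hexp, fun r => ?_⟩
    have hnt : n * t = 0 := by
      rcases Nat.eq_zero_or_pos t with ht | ht
      · rw [ht, mul_zero]
      · have hn : n ≤ n * t := Nat.le_mul_of_pos_right n ht
        have hntm : n * t < m := (Nat.div_eq_zero_iff_lt r.pos).mp hD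
        omega
    have hr : rightDeg N r ≤ n * t := sum_rightDeg hreg ▸ single_le_sum (by simp) (mem_univ r)
    rw [show rightDeg N r = 0 by omega, Nat.cast_zero]
    positivity
  · obtain ⟨m', hm', π, N', hlift, hdeg⟩ := exists_isLift_rightDeg_le hreg hD
    obtain ⟨hm, hmnt⟩ := Nat.div_pos_iff.mp hD
    have hcopies : n * t / (n * t / m) < 2 * m := div_div_lt_two_mul hm hmnt
    refine ⟨m', by omega, N', hlift.leftRegular hreg, hlift.uniqueExpander hexp, fun x => ?_⟩
    calc (rightDeg N' x : ℝ) ≤ (n * t / m : ℕ) := by exact_mod_cast hdeg x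
      _ ≤ t * n / m := by rw [mul_comm]; exact_mod_cast Nat.cast_div_le
end

section
/- Let p ≥ 1, let k be a positive integer with 2k ≤ n, let ε ∈ [0,1], and suppose the subspace X ⊆ ℝ^n is (2k, ε)-ℓ_p-spread. Let S ⊆ [n] with |S| = k, and let X_{S̄} ⊆ ℝ^{[n]\S} be the image of X under the coordinate projection onto the coordinates not in S. Then X_{S̄} is (k, ε)-ℓ_p-spread (as a subspace of ℝ^{[n]\S}). -/
open Finset

/-! A sparse approximation `y` of the projection `x ∘ e` lifts to one of `x` by copying `x` on
the discarded coordinates: the error vector is the old one padded with zeros, so its `ℓ_p` norm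
is unchanged, the support grows by at most the number of discarded coordinates, and projecting
does not increase `‖x‖_p`. -/

open Function

section Projection

variable {ι κ : Type*} [Fintype ι] [Fintype κ] {e : κ → ι} {p : ℝ}

theorem lpNorm_comp_le_of_injective (he : Injective e) (hp : 0 ≤ p) (x : ι → ℝ) :
    lpNorm p (x ∘ e) ≤ lpNorm p x := by
  classical
  unfold lpNorm
  gcongr
  calc ∑ j, |(x ∘ e) j| ^ p = ∑ i ∈ univ.image e, |x i| ^ p :=
        (sum_image (f := fun i => |x i| ^ p) fun _ _ _ _ h => he h).symm
    _ ≤ ∑ i, |x i| ^ p :=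
        sum_le_sum_of_subset_of_nonneg (subset_univ _) fun i _ _ => by positivity

theorem lpNorm_comp_of_injective (he : Injective e) (hp : p ≠ 0) {w : ι → ℝ}
    (hw : ∀ i ∉ Set.range e, w i = 0) : lpNorm p (w ∘ e) = lpNorm p w := by
  unfold lpNorm
  congr 1
  exact Fintype.sum_of_injective e he _ _ (fun i hi => by simp [hw i hi, hp]) fun _ => rfl

theorem ncard_support_extend_le (he : Injective e) (y : κ → ℝ) (x : ι → ℝ) :
    (support (extend e y x)).ncard ≤ (support y).ncard + (Set.range e)ᶜ.ncard := by
  have hsub : support (extend e y x) ⊆ e '' support y ∪ (Set.range e)ᶜ := by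
    intro i hi
    by_cases hr : i ∈ Set.range e
    · obtain ⟨j, rfl⟩ := hr
      exact Or.inl ⟨j, by rwa [mem_support, he.extend_apply] at hi, rfl⟩
    · exact Or.inr hr
  calc (support (extend e y x)).ncard ≤ (e '' support y ∪ (Set.range e)ᶜ).ncard :=
        Set.ncard_le_ncard hsub
    _ ≤ (e '' support y).ncard + (Set.range e)ᶜ.ncard := Set.ncard_union_le _ _
    _ ≤ (support y).ncard + (Set.range e)ᶜ.ncard := by
        gcongr; exact Set.ncard_image_le (Set.toFinite _)

theorem Compressible.of_comp (he : Injective e) (hp : 0 < p) {k ε : ℝ} (hε : 0 ≤ ε)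
    {x : ι → ℝ} (h : Compressible p k ε (x ∘ e)) :
    Compressible p (k + (Set.range e)ᶜ.ncard) ε x := by
  obtain ⟨y, hy, hxy⟩ := h
  refine ⟨extend e y x, ?_, ?_⟩
  · calc ((support (extend e y x)).ncard : ℝ) ≤ (support y).ncard + (Set.range e)ᶜ.ncard := by
          exact_mod_cast ncard_support_extend_le he y x
      _ ≤ k + (Set.range e)ᶜ.ncard := by gcongr; exact hy
  · have hcomp : (x - extend e y x) ∘ e = x ∘ e - y := by
      ext j; simp [he.extend_apply]
    have hout : ∀ i ∉ Set.range e, (x - extend e y x) i = 0 := fun i hi => by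
      simp [extend_apply' _ _ _ (by simpa using hi)]
    calc lpNorm p (x - extend e y x) = lpNorm p (x ∘ e - y) := by
          rw [← hcomp, lpNorm_comp_of_injective he hp.ne' hout]
      _ ≤ ε * lpNorm p (x ∘ e) := hxy
      _ ≤ ε * lpNorm p x := by gcongr; exact lpNorm_comp_le_of_injective he hp.le x

theorem SpreadSubspace.map_funLeft (he : Injective e) (hp : 0 < p) {k ε : ℝ} (hε : 0 ≤ ε)
    {X : Submodule ℝ (ι → ℝ)} (hX : SpreadSubspace p (k + (Set.range e)ᶜ.ncard) ε X) :
    SpreadSubspace p k ε (X.map (LinearMap.funLeft ℝ ℝ e)) := by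
  rintro _ ⟨x, hx, rfl⟩ hx0 hc
  exact hX x hx (by rintro rfl; exact hx0 (map_zero _)) (Compressible.of_comp he hp hε hc)

end Projection

theorem SpreadSubspace.anti {ι : Type*} [Fintype ι] {p k k' ε : ℝ} {X : Submodule ℝ (ι → ℝ)}
    (hX : SpreadSubspace p k' ε X) (hk : k ≤ k') : SpreadSubspace p k ε X :=
  fun x hx hx0 ⟨y, hy, hxy⟩ => hX x hx hx0 ⟨y, hy.trans hk, hxy⟩

theorem projection_spread_general {n : ℕ} (p : ℝ) (hp : 1 ≤ p) (k : ℕ)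
    (ε : ℝ) (hε : ε ∈ Set.Icc (0 : ℝ) 1)
    (X : Submodule ℝ (Fin n → ℝ)) (hX : SpreadSubspace p (2 * (k : ℝ)) ε X)
    (S : Finset (Fin n)) (hS : S.card = k) :
    SpreadSubspace p k ε
      (X.map (LinearMap.funLeft ℝ ℝ (fun i : {i : Fin n // i ∉ S} => (i : Fin n)))) := by
  have hrange : (Set.range fun i : {i : Fin n // i ∉ S} => (i : Fin n))ᶜ.ncard = k := by
    rw [Subtype.range_coe_subtype, Set.compl_ofPred]
    simp [hS]
  refine SpreadSubspace.map_funLeft Subtype.val_injective (by linarith) hε.1 (hX.anti ?_)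
  rw [hrange]
  linarith

/-- **Coordinate projections of spread subspaces are spread.** If `X ⊆ ℝ^n` is
`(2k, ε)`-`ℓ_p`-spread and `|S| = k`, then the image of `X` under the projection onto the
coordinates not in `S` is `(k, ε)`-`ℓ_p`-spread. -/
theorem projection_spread {n : ℕ} (p : ℝ) (hp : 1 ≤ p) (k : ℕ) (hk : 0 < k)
    (hkn : 2 * k ≤ n) (ε : ℝ) (hε : ε ∈ Set.Icc (0 : ℝ) 1)
    (X : Submodule ℝ (Fin n → ℝ)) (hX : SpreadSubspace p (2 * (k : ℝ)) ε X)
    (S : Finset (Fin n)) (hS : S.card = k) :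
    SpreadSubspace p k ε
      (X.map (LinearMap.funLeft ℝ ℝ (fun i : {i : Fin n // i ∉ S} => (i : Fin n)))) :=
  projection_spread_general p hp k ε hε X hX S hS
end

section
/- Let p ≥ 1, let k ≤ n be positive integers, let ε ∈ [0,1), and let A ∈ ℝ^{m×n} satisfy (1−ε)‖x‖_p ≤ ‖Ax‖_p ≤ (1+ε)‖x‖_p for every k-sparse x ∈ ℝ^n. Then for every x ∈ ℝ^n, ‖Ax‖_p ≤ (1+ε)·⌈n/k⌉^{1−1/p}·‖x‖_p. -/
open Finset

/-!
Cut the index set `{0, …, n-1}` into `⌈n/k⌉` consecutive blocks of length at most `k` and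
split `x` accordingly into `k`-sparse pieces `x_j`. By the triangle inequality and the upper
RIP bound, `‖Ax‖_p ≤ (1+ε) ∑ⱼ ‖x_j‖_p`, and since the pieces have disjoint supports,
`∑ⱼ ‖x_j‖_p^p = ‖x‖_p^p`, so Hölder's inequality gives `∑ⱼ ‖x_j‖_p ≤ ⌈n/k⌉^{1-1/p} ‖x‖_p`.
-/

section LpNorm

variable {ι : Type*} [Fintype ι] {p : ℝ}

lemma lpNorm_nonneg (p : ℝ) (x : ι → ℝ) : 0 ≤ lpNorm p x :=
  Real.rpow_nonneg (sum_nonneg fun _ _ => Real.rpow_nonneg (abs_nonneg _) _) _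

lemma lpNorm_rpow (hp : p ≠ 0) (x : ι → ℝ) : lpNorm p x ^ p = ∑ i, |x i| ^ p := by
  rw [lpNorm, ← Real.rpow_mul (sum_nonneg fun _ _ => Real.rpow_nonneg (abs_nonneg _) _),
    one_div_mul_cancel hp, Real.rpow_one]

lemma lpNorm_zero (hp : p ≠ 0) : lpNorm p (0 : ι → ℝ) = 0 := by
  simp [lpNorm, Real.zero_rpow hp, Real.zero_rpow (inv_ne_zero hp)]

lemma lpNorm_add_le (hp : 1 ≤ p) (x y : ι → ℝ) :
    lpNorm p (x + y) ≤ lpNorm p x + lpNorm p y :=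
  Real.Lp_add_le univ x y hp

lemma lpNorm_sum_le {α : Type*} (hp : 1 ≤ p) (s : Finset α) (x : α → ι → ℝ) :
    lpNorm p (∑ a ∈ s, x a) ≤ ∑ a ∈ s, lpNorm p (x a) := by
  induction s using Finset.cons_induction with
  | empty => simp [lpNorm_zero (by linarith : p ≠ 0)]
  | cons a s _ ih =>
    rw [sum_cons, sum_cons]
    exact (lpNorm_add_le hp _ _).trans (by linarith)

end LpNorm

lemma sparse_indicator {ι : Type*} [Finite ι] {k : ℕ} {s : Set ι} (hs : s.ncard ≤ k)
    (x : ι → ℝ) : Sparse k (s.indicator x) := by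
  unfold Sparse
  exact_mod_cast (Set.ncard_le_ncard Set.support_indicator_subset).trans hs

lemma sum_indicator_fiber {ι κ M : Type*} [Fintype κ] [AddCommMonoid M] (f : ι → κ)
    (x : ι → M) : ∑ j, (f ⁻¹' {j}).indicator x = x := by
  classical
  funext i
  simp [Finset.sum_apply, Set.indicator_apply, eq_comm]

section Fibers

variable {ι κ : Type*} [Fintype ι] [Fintype κ] {p : ℝ}

lemma sum_lpNorm_indicator_fiber_rpow (hp : p ≠ 0) (f : ι → κ) (x : ι → ℝ) :
    ∑ j, lpNorm p ((f ⁻¹' {j}).indicator x) ^ p = lpNorm p x ^ p := by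
  simp_rw [lpNorm_rpow hp]
  rw [sum_comm]
  refine sum_congr rfl fun i _ => ?_
  have h := congrFun (sum_indicator_fiber f fun i => |x i| ^ p) i
  simp only [Finset.sum_apply] at h
  rw [← h]
  refine sum_congr rfl fun j _ => ?_
  by_cases hij : f i = j <;> simp [hij, Real.zero_rpow hp]

lemma sum_lpNorm_indicator_fiber_le (hp : 1 ≤ p) (f : ι → κ) (x : ι → ℝ) :
    ∑ j, lpNorm p ((f ⁻¹' {j}).indicator x) ≤
      (Fintype.card κ : ℝ) ^ (1 - 1 / p) * lpNorm p x := by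
  have hp0 : p ≠ 0 := by linarith
  have h := Real.inner_le_weight_mul_Lp_of_nonneg univ hp (fun _ => 1)
    (fun j => lpNorm p ((f ⁻¹' {j}).indicator x)) (fun _ => zero_le_one)
    (fun _ => lpNorm_nonneg p _)
  simp only [one_mul, sum_const, card_univ, nsmul_eq_mul, mul_one] at h
  rwa [sum_lpNorm_indicator_fiber_rpow hp0, Real.rpow_rpow_inv (lpNorm_nonneg p x) hp0,
    ← one_div] at h

theorem lpNorm_mulVec_le_of_sparse {ρ : Type*} [Fintype ρ] (hp : 1 ≤ p) {k : ℕ} (f : ι → κ)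
    (hf : ∀ j, (f ⁻¹' {j}).ncard ≤ k) (A : Matrix ρ ι ℝ) {C : ℝ} (hC : 0 ≤ C)
    (hA : ∀ y : ι → ℝ, Sparse k y → lpNorm p (A.mulVec y) ≤ C * lpNorm p y) (x : ι → ℝ) :
    lpNorm p (A.mulVec x) ≤ C * (Fintype.card κ : ℝ) ^ (1 - 1 / p) * lpNorm p x := by
  set y := fun j => (f ⁻¹' {j}).indicator x
  calc lpNorm p (A.mulVec x) = lpNorm p (∑ j, A.mulVec (y j)) := by
        rw [← Matrix.mulVec_sum, sum_indicator_fiber]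
    _ ≤ ∑ j, lpNorm p (A.mulVec (y j)) := lpNorm_sum_le hp _ _
    _ ≤ ∑ j, C * lpNorm p (y j) := sum_le_sum fun j _ => hA _ (sparse_indicator (hf j) x)
    _ = C * ∑ j, lpNorm p (y j) := by rw [mul_sum]
    _ ≤ C * ((Fintype.card κ : ℝ) ^ (1 - 1 / p) * lpNorm p x) :=
        mul_le_mul_of_nonneg_left (sum_lpNorm_indicator_fiber_le hp f x) hC
    _ = _ := by ring

end Fibers

section Blocks

variable {n k : ℕ}

lemma lt_ceil_div_of_lt (hk : 0 < k) {i : ℕ} (hi : i < n) : i / k < ⌈(n : ℝ) / k⌉₊ := by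
  rw [Nat.div_lt_iff_lt_mul hk]
  have hkR : (0 : ℝ) < k := by exact_mod_cast hk
  have : (n : ℝ) ≤ ⌈(n : ℝ) / k⌉₊ * k := (div_le_iff₀ hkR).1 (Nat.le_ceil _)
  exact hi.trans_le (by exact_mod_cast this)

noncomputable def blockIndex (hk : 0 < k) (i : Fin n) : Fin ⌈(n : ℝ) / k⌉₊ :=
  ⟨i / k, lt_ceil_div_of_lt hk i.2⟩

lemma ncard_blockIndex_fiber_le (hk : 0 < k) (j : Fin ⌈(n : ℝ) / k⌉₊) :
    (blockIndex hk ⁻¹' {j}).ncard ≤ k := by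
  have hinj : Set.InjOn (fun i : Fin n => (i : ℕ) % k) (blockIndex hk ⁻¹' {j}) := by
    intro i hi i' hi' hmod
    simp only [Set.mem_preimage, Set.mem_singleton_iff, blockIndex, Fin.ext_iff] at hi hi'
    have e := Nat.div_add_mod (i : ℕ) k
    have e' := Nat.div_add_mod (i' : ℕ) k
    simp only at hmod
    exact Fin.ext (by rw [← e, ← e', hi, hi', hmod])
  calc (blockIndex hk ⁻¹' {j}).ncard
      ≤ ((range k : Finset ℕ) : Set ℕ).ncard :=
        Set.ncard_le_ncard_of_injOn _ (fun i _ => mem_range.2 (Nat.mod_lt _ hk)) hinj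
    _ = k := by rw [Set.ncard_coe_finset, card_range]

end Blocks

theorem rip_op_norm_bound_general {m n : ℕ} (p : ℝ) (hp : 1 ≤ p) (k : ℕ) (hk : 0 < k)
    (ε : ℝ) (hε0 : 0 ≤ ε)
    (A : Matrix (Fin m) (Fin n) ℝ)
    (hA : ∀ x : Fin n → ℝ, Sparse k x →
      (1 - ε) * lpNorm p x ≤ lpNorm p (A.mulVec x) ∧
      lpNorm p (A.mulVec x) ≤ (1 + ε) * lpNorm p x) :
    ∀ x : Fin n → ℝ,
      lpNorm p (A.mulVec x) ≤ (1 + ε) * (⌈(n : ℝ) / k⌉₊ : ℝ) ^ (1 - 1 / p) * lpNorm p x := by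
  intro x
  simpa using lpNorm_mulVec_le_of_sparse hp (blockIndex hk) (ncard_blockIndex_fiber_le hk) A
    (by linarith) (fun y hy => (hA y hy).2) x

/-- **Operator norm bound from RIP.** If `(1-ε)‖x‖_p ≤ ‖Ax‖_p ≤ (1+ε)‖x‖_p` for every
`k`-sparse `x`, then `‖Ax‖_p ≤ (1+ε)⌈n/k⌉^(1-1/p)‖x‖_p` for every `x ∈ ℝ^n`. -/
theorem rip_op_norm_bound {m n : ℕ} (p : ℝ) (hp : 1 ≤ p) (k : ℕ) (hk : 0 < k)
    (hkn : k ≤ n) (ε : ℝ) (hε0 : 0 ≤ ε) (hε1 : ε < 1)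
    (A : Matrix (Fin m) (Fin n) ℝ)
    (hA : ∀ x : Fin n → ℝ, Sparse k x →
      (1 - ε) * lpNorm p x ≤ lpNorm p (A.mulVec x) ∧
      lpNorm p (A.mulVec x) ≤ (1 + ε) * lpNorm p x) :
    ∀ x : Fin n → ℝ,
      lpNorm p (A.mulVec x) ≤ (1 + ε) * (⌈(n : ℝ) / k⌉₊ : ℝ) ^ (1 - 1 / p) * lpNorm p x :=
  rip_op_norm_bound_general p hp k hk ε hε0 A hA
end
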